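/- Let J, V : ℝ → M₄(ℂ) be differentiable maps solving the linear system (⋆) with J(0) = Id and V(0) = M₀ where M₀ᵀ = M₀. Let (j, v) : ℝ → ℝ⁴ × ℝ⁴ be a differentiable real-valued solution of (⋆) such that j(s) ≠ 0 for every s and v(0) = M₀ · j(0), and assume there exists a 3-dimensional real subspace W ⊆ ℝ⁴ with W ⊕ ℝ·j(0) = ℝ⁴ and xᵀ (Im M₀) x > 0 for every nonzero x ∈ W. Then: (i) j(s) = J(s) j(0) and v(s) = V(s) j(0) for all s; (ii) J(s) is invertible for all s and M(s) := V(s) J(s)⁻¹ satisfies M(s)ᵀ = M(s) and M(s) j(s) = v(s); (iii) for every f ∈ ℂ⁴ and every s, ((Im M(s)) (J(s) f)) · conj(J(s) f) = ((Im M₀) f) · conj(f); (iv) for every s and every x ∈ ℂ⁴, ((Im M(s)) x) · conj(x) ≥ 0, with equality if and only if x ∈ ℂ·j(s). -/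

import Mathlib

/-!
(⋆) is the linear Hamiltonian system with Hamiltonian `½ xᵀAx + xᵀBy + ½ yᵀCy`, so for any two
of its solutions the symplectic pairing `x₁ · y₂ - y₁ · x₂` is constant. Pairing columns of
`(J, V)` with each other gives `JᵀV = VᵀJ`, so `M = VJ⁻¹` is symmetric once `J` is invertible;
pairing `(Jf, Vf)` with its complex conjugate shows that `Im (conj (Jf) · Vf) = Im (conj f · M₀ f)`
is conserved. Writing `f = a + ib`, the right side is `aᵀ(Im M₀)a + bᵀ(Im M₀)b`, and `Im M₀`
is positive on `W` and kills `j(0)` (because `v(0) = M₀ j(0)` is real), so this form is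
positive semidefinite with kernel `ℂ j(0)`. Hence the kernel of `J(s)` lies in `ℂ j(0)`, while
`J(s) j(0) = j(s) ≠ 0` by uniqueness for linear ODEs (Grönwall); so `J(s)` is invertible, and
(iii), (iv) are the conserved form read through `x = J(s) f`.
-/

open Matrix

/-- Entrywise coercion of a real matrix to a complex matrix. -/
noncomputable def matC (A : Matrix (Fin 4) (Fin 4) ℝ) : Matrix (Fin 4) (Fin 4) ℂ :=
  A.map Complex.ofReal

section Gronwall

variable {E : Type*} [NormedAddCommGroup E] [NormedSpace ℝ E] {g G : ℝ → E} {K : ℝ → ℝ}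

theorem eq_zero_of_hasDerivAt_of_norm_le_mul_of_nonneg (hg : ∀ t, HasDerivAt g (G t) t)
    (hK : Continuous K) (hb : ∀ t, ‖G t‖ ≤ K t * ‖g t‖) (h0 : g 0 = 0) {t : ℝ} (ht : 0 ≤ t) :
    g t = 0 := by
  obtain ⟨L, hL⟩ := (isCompact_Icc (a := 0) (b := t)).exists_bound_of_continuousOn hK.continuousOn
  refine eq_zero_of_abs_deriv_le_mul_abs_self_of_eq_zero_right (K := L)
    (fun x _ => (hg x).continuousAt.continuousWithinAt) (fun x _ => (hg x).hasDerivWithinAt) h0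
    (fun x hx => (hb x).trans ?_) t ⟨ht, le_rfl⟩
  exact mul_le_mul_of_nonneg_right ((Real.le_norm_self _).trans (hL x (Set.Ico_subset_Icc_self hx)))
    (norm_nonneg _)

theorem eq_zero_of_hasDerivAt_of_norm_le_mul (hg : ∀ t, HasDerivAt g (G t) t)
    (hK : Continuous K) (hb : ∀ t, ‖G t‖ ≤ K t * ‖g t‖) (h0 : g 0 = 0) (t : ℝ) : g t = 0 := by
  rcases le_total 0 t with ht | ht
  · exact eq_zero_of_hasDerivAt_of_norm_le_mul_of_nonneg hg hK hb h0 ht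
  · have hrev : ∀ u, HasDerivAt (fun u => g (-u)) (-G (-u)) u := fun u => by
      simpa [Function.comp_def] using (hg (-u)).scomp u (hasDerivAt_neg u)
    simpa using eq_zero_of_hasDerivAt_of_norm_le_mul_of_nonneg hrev (hK.comp continuous_neg)
      (fun u => by simpa using hb (-u)) (by simpa using h0) (neg_nonneg.2 ht)

end Gronwall

theorem Matrix.norm_mulVec_le {m n R : Type*} [Fintype m] [Fintype n] [NormedRing R]
    (M : Matrix m n R) (x : n → R) : ‖M *ᵥ x‖ ≤ (∑ i, ∑ k, ‖M i k‖) * ‖x‖ := by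
  refine (pi_norm_le_iff_of_nonneg (by positivity)).2 fun i => ?_
  calc ‖(M *ᵥ x) i‖ ≤ ∑ k, ‖M i k‖ * ‖x‖ :=
        (norm_sum_le _ _).trans <| Finset.sum_le_sum fun k _ =>
          (norm_mul_le _ _).trans (mul_le_mul_of_nonneg_left (norm_le_pi_norm x k) (norm_nonneg _))
    _ ≤ (∑ i, ∑ k, ‖M i k‖) * ‖x‖ := by
        rw [← Finset.sum_mul]
        exact mul_le_mul_of_nonneg_right (Finset.single_le_sum (f := fun i => ∑ k, ‖M i k‖)
          (fun i _ => by positivity) (Finset.mem_univ i)) (norm_nonneg _)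

section Derivatives

variable {𝕜 𝔸 : Type*} [NontriviallyNormedField 𝕜] [NormedRing 𝔸] [NormedAlgebra 𝕜 𝔸]
  {m n : Type*} [Fintype n] {t : 𝕜}

theorem HasDerivAt.dotProduct {f g : 𝕜 → n → 𝔸} {f' g' : n → 𝔸} (hf : HasDerivAt f f' t)
    (hg : HasDerivAt g g' t) :
    HasDerivAt (fun s => f s ⬝ᵥ g s) (f' ⬝ᵥ g t + f t ⬝ᵥ g') t := by
  have := HasDerivAt.fun_sum (u := Finset.univ) fun i _ =>
    (hasDerivAt_pi.1 hf i).mul (hasDerivAt_pi.1 hg i)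
  rwa [Finset.sum_add_distrib] at this

theorem hasDerivAt_mulVec_of_entries {J : 𝕜 → Matrix m n 𝔸} {J' : Matrix m n 𝔸}
    (hJ : ∀ i k, HasDerivAt (fun s => J s i k) (J' i k) t) (f : n → 𝔸) :
    HasDerivAt (fun s => J s *ᵥ f) (J' *ᵥ f) t :=
  hasDerivAt_pi.2 fun i => HasDerivAt.fun_sum fun k _ => (hJ i k).mul_const (f k)

end Derivatives

theorem eq_of_hasDerivAt_mulVec {ι 𝕜 : Type*} [Fintype ι] [RCLike 𝕜] {H : ℝ → Matrix ι ι 𝕜}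
    (hH : ∀ i k, Continuous fun t => H t i k) {z₁ z₂ : ℝ → ι → 𝕜}
    (h₁ : ∀ t, HasDerivAt z₁ (H t *ᵥ z₁ t) t) (h₂ : ∀ t, HasDerivAt z₂ (H t *ᵥ z₂ t) t)
    (h0 : z₁ 0 = z₂ 0) (t : ℝ) : z₁ t = z₂ t :=
  sub_eq_zero.1 <| eq_zero_of_hasDerivAt_of_norm_le_mul (g := z₁ - z₂)
    (fun t => by simpa [mulVec_sub] using (h₁ t).sub (h₂ t))
    (continuous_finsetSum _ fun i _ => continuous_finsetSum _ fun k _ => (hH i k).norm)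
    (fun t => norm_mulVec_le _ _) (by simp [h0]) t

theorem Matrix.map_ofReal_mulVec {m n : Type*} [Fintype n] (M : Matrix m n ℝ) (x : n → ℝ) :
    M.map Complex.ofReal *ᵥ (fun i => (x i : ℂ)) = fun i => ((M *ᵥ x) i : ℂ) :=
  funext fun i => (RingHom.map_mulVec Complex.ofRealHom M x i).symm

theorem Matrix.map_im_mulVec {m n : Type*} [Fintype n] (N : Matrix m n ℂ) (c : n → ℝ) :
    N.map Complex.im *ᵥ c = fun i => (N *ᵥ fun k => (c k : ℂ)) i |>.im := by
  funext i
  simp [mulVec, dotProduct, Complex.im_sum]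

theorem Matrix.star_map_ofReal_mulVec {m n : Type*} [Fintype n] (M : Matrix m n ℝ) (v : n → ℂ) :
    star (M.map Complex.ofReal *ᵥ v) = M.map Complex.ofReal *ᵥ star v := by
  funext i
  simp [mulVec, dotProduct, Complex.conj_ofReal]

theorem Matrix.dotProduct_mulVec_eq_transpose_mulVec_dotProduct {n R : Type*} [Fintype n]
    [CommSemiring R] (u w : n → R) (M : Matrix n n R) : u ⬝ᵥ M *ᵥ w = Mᵀ *ᵥ u ⬝ᵥ w := by
  rw [dotProduct_mulVec, mulVec_transpose]

section HamiltonianSystem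

variable {n : Type*} [Fintype n] {A B C : ℝ → Matrix n n ℝ}

/-- `(x, y)` solves (⋆). -/
def IsHamiltonianSolution (A B C : ℝ → Matrix n n ℝ) (x y : ℝ → n → ℂ) : Prop :=
  ∀ s, HasDerivAt x (((B s).map Complex.ofReal)ᵀ *ᵥ x s + (C s).map Complex.ofReal *ᵥ y s) s ∧
    HasDerivAt y (-(A s).map Complex.ofReal *ᵥ x s - (B s).map Complex.ofReal *ᵥ y s) s

theorem isHamiltonianSolution_ofReal {x y : ℝ → n → ℝ}
    (hx : ∀ s i, HasDerivAt (fun t => x t i) (((B s)ᵀ *ᵥ x s + C s *ᵥ y s) i) s)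
    (hy : ∀ s i, HasDerivAt (fun t => y t i) ((-(A s) *ᵥ x s - B s *ᵥ y s) i) s) :
    IsHamiltonianSolution A B C (fun s i => (x s i : ℂ)) (fun s i => (y s i : ℂ)) := by
  intro s
  constructor <;> refine hasDerivAt_pi.2 fun i => ?_
  · simpa [← transpose_map, map_ofReal_mulVec] using (hx s i).ofReal_comp
  · simpa [← Matrix.map_neg, map_ofReal_mulVec] using (hy s i).ofReal_comp

theorem isHamiltonianSolution_mulVec {J V : ℝ → Matrix n n ℂ}
    (hJ : ∀ s i k, HasDerivAt (fun t => J t i k)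
      ((((B s).map Complex.ofReal)ᵀ * J s + (C s).map Complex.ofReal * V s) i k) s)
    (hV : ∀ s i k, HasDerivAt (fun t => V t i k)
      ((-(A s).map Complex.ofReal * J s - (B s).map Complex.ofReal * V s) i k) s)
    (f : n → ℂ) :
    IsHamiltonianSolution A B C (fun s => J s *ᵥ f) (fun s => V s *ᵥ f) := fun s =>
  ⟨by simpa [add_mulVec, mulVec_mulVec] using hasDerivAt_mulVec_of_entries (hJ s) f,
    by simpa [sub_mulVec, mulVec_mulVec] using hasDerivAt_mulVec_of_entries (hV s) f⟩

namespace IsHamiltonianSolution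

variable {x y x₁ y₁ x₂ y₂ : ℝ → n → ℂ}

theorem conj (h : IsHamiltonianSolution A B C x y) :
    IsHamiltonianSolution A B C (fun s => star (x s)) (fun s => star (y s)) := fun s => by
  obtain ⟨hx, hy⟩ := h s
  exact ⟨by simpa [← transpose_map, star_map_ofReal_mulVec] using hx.star,
    by simpa [← Matrix.map_neg, star_map_ofReal_mulVec] using hy.star⟩

theorem hasDerivAt_sumElim (h : IsHamiltonianSolution A B C x y) (s : ℝ) :
    HasDerivAt (fun t => Sum.elim (x t) (y t))
      ((fromBlocks (B s)ᵀ (C s) (-A s) (-B s)).map Complex.ofReal *ᵥ Sum.elim (x s) (y s)) s := by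
  rw [fromBlocks_map, fromBlocks_mulVec, hasDerivAt_pi]
  rintro (i | i)
  · simpa [transpose_map] using hasDerivAt_pi.1 (h s).1 i
  · simpa [Matrix.map_neg, neg_mulVec, sub_eq_add_neg] using hasDerivAt_pi.1 (h s).2 i

theorem eq_of_eq (hA : ∀ i k, Continuous fun s => A s i k)
    (hB : ∀ i k, Continuous fun s => B s i k) (hC : ∀ i k, Continuous fun s => C s i k)
    (h₁ : IsHamiltonianSolution A B C x₁ y₁) (h₂ : IsHamiltonianSolution A B C x₂ y₂)
    (hx : x₁ 0 = x₂ 0) (hy : y₁ 0 = y₂ 0) (s : ℝ) : x₁ s = x₂ s ∧ y₁ s = y₂ s := by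
  have hH : ∀ i k, Continuous fun t => (fromBlocks (B t)ᵀ (C t) (-A t) (-B t)).map
      Complex.ofReal i k := by
    rintro (i | i) (k | k) <;> simp only [map_apply, fromBlocks_apply₁₁, fromBlocks_apply₁₂,
      fromBlocks_apply₂₁, fromBlocks_apply₂₂, transpose_apply] <;> fun_prop
  have := eq_of_hasDerivAt_mulVec hH h₁.hasDerivAt_sumElim h₂.hasDerivAt_sumElim
    (by rw [hx, hy]) s
  exact ⟨funext fun i => congrFun this (.inl i), funext fun i => congrFun this (.inr i)⟩

theorem dotProduct_sub_dotProduct_eq (hA : ∀ s, (A s).IsSymm) (hC : ∀ s, (C s).IsSymm)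
    (h₁ : IsHamiltonianSolution A B C x₁ y₁) (h₂ : IsHamiltonianSolution A B C x₂ y₂) (s : ℝ) :
    x₁ s ⬝ᵥ y₂ s - y₁ s ⬝ᵥ x₂ s = x₁ 0 ⬝ᵥ y₂ 0 - y₁ 0 ⬝ᵥ x₂ 0 := by
  have hderiv : ∀ t, HasDerivAt (fun t => x₁ t ⬝ᵥ y₂ t - y₁ t ⬝ᵥ x₂ t) 0 t := fun t => by
    refine (((h₁ t).1.dotProduct (h₂ t).2).fun_sub ((h₁ t).2.dotProduct (h₂ t).1)).congr_deriv ?_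
    simp only [add_dotProduct, dotProduct_add, sub_dotProduct, dotProduct_sub, neg_mulVec,
      neg_dotProduct, dotProduct_neg, dotProduct_mulVec_eq_transpose_mulVec_dotProduct,
      ← transpose_map, (hA t).eq, (hC t).eq, transpose_transpose]
    ring
  exact is_const_of_deriv_eq_zero (fun t => (hderiv t).differentiableAt)
    (fun t => (hderiv t).deriv) s 0

theorem im_star_dotProduct_eq (hA : ∀ s, (A s).IsSymm) (hC : ∀ s, (C s).IsSymm)
    (h : IsHamiltonianSolution A B C x y) (s : ℝ) :
    (star (x s) ⬝ᵥ y s).im = (star (x 0) ⬝ᵥ y 0).im := by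
  have key : ∀ t, x t ⬝ᵥ star (y t) - y t ⬝ᵥ star (x t) =
      star (star (x t) ⬝ᵥ y t) - star (x t) ⬝ᵥ y t := fun t => by
    rw [dotProduct_star, dotProduct_comm (y t)]
  have := congrArg Complex.im (h.dotProduct_sub_dotProduct_eq hA hC h.conj s)
  simp only [key, Complex.sub_im, Complex.star_def, Complex.conj_im] at this
  linarith

end IsHamiltonianSolution

theorem transpose_mul_sub_transpose_mul_eq_of_isHamiltonianSolution [DecidableEq n]
    (hA : ∀ s, (A s).IsSymm) (hC : ∀ s, (C s).IsSymm) {J V : ℝ → Matrix n n ℂ}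
    (hJV : ∀ f, IsHamiltonianSolution A B C (fun s => J s *ᵥ f) (fun s => V s *ᵥ f)) (s : ℝ) :
    (J s)ᵀ * V s - (V s)ᵀ * J s = (J 0)ᵀ * V 0 - (V 0)ᵀ * J 0 := by
  ext i k
  have h := (hJV (Pi.single i 1)).dotProduct_sub_dotProduct_eq hA hC (hJV (Pi.single k 1)) s
  simp only [mulVec_single_one] at h
  simp only [Matrix.sub_apply, mul_apply']
  exact h

end HamiltonianSystem

section QuadraticForms

variable {n : Type*} [Fintype n]

theorem Matrix.IsSymm.dotProduct_mulVec_comm {R : Type*} [CommSemiring R] {S : Matrix n n R}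
    (hS : S.IsSymm) (u w : n → R) : u ⬝ᵥ S *ᵥ w = w ⬝ᵥ S *ᵥ u := by
  rw [dotProduct_mulVec_eq_transpose_mulVec_dotProduct, hS.eq, dotProduct_comm]

theorem Matrix.IsSymm.add_smul_dotProduct_mulVec_add_smul {R : Type*} [CommRing R]
    {S : Matrix n n R} (hS : S.IsSymm) {c : n → R} (hSc : S *ᵥ c = 0) (w : n → R) (t : R) :
    (w + t • c) ⬝ᵥ S *ᵥ (w + t • c) = w ⬝ᵥ S *ᵥ w := by
  simp [mulVec_add, mulVec_smul, hSc, add_dotProduct, hS.dotProduct_mulVec_comm c w]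

theorem Matrix.IsSymm.dotProduct_mulVec_nonneg_and_eq_zero_iff {S : Matrix n n ℝ}
    (hS : S.IsSymm) {c : n → ℝ} (hSc : S *ᵥ c = 0) {W : Submodule ℝ (n → ℝ)}
    (hW : IsCompl W (ℝ ∙ c)) (hpos : ∀ w ∈ W, w ≠ 0 → 0 < w ⬝ᵥ S *ᵥ w) (x : n → ℝ) :
    0 ≤ x ⬝ᵥ S *ᵥ x ∧ (x ⬝ᵥ S *ᵥ x = 0 ↔ ∃ t : ℝ, x = t • c) := by
  obtain ⟨w, hw, _, hu, rfl⟩ :=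
    Submodule.mem_sup.1 (hW.sup_eq_top ▸ Submodule.mem_top : x ∈ W ⊔ ℝ ∙ c)
  obtain ⟨t, rfl⟩ := Submodule.mem_span_singleton.1 hu
  rw [hS.add_smul_dotProduct_mulVec_add_smul hSc]
  rcases eq_or_ne w 0 with rfl | hw0
  · simpa using ⟨t, rfl⟩
  refine ⟨(hpos w hw hw0).le, iff_of_false (hpos w hw hw0).ne' ?_⟩
  rintro ⟨t', h⟩
  refine hw0 (Submodule.disjoint_def.1 hW.disjoint w hw ?_)
  exact Submodule.mem_span_singleton.2 ⟨t' - t, by rw [sub_smul, ← h]; abel⟩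

theorem im_star_dotProduct_mulVec {N : Matrix n n ℂ} (hN : N.IsSymm) (f : n → ℂ) :
    (star f ⬝ᵥ N *ᵥ f).im =
      (fun i => (f i).re) ⬝ᵥ N.map Complex.im *ᵥ (fun i => (f i).re) +
        (fun i => (f i).im) ⬝ᵥ N.map Complex.im *ᵥ (fun i => (f i).im) := by
  set a : n → ℝ := fun i => (f i).re
  set b : n → ℝ := fun i => (f i).im
  have hexpand : (star f ⬝ᵥ N *ᵥ f).im = a ⬝ᵥ N.map Complex.im *ᵥ a +
      b ⬝ᵥ N.map Complex.im *ᵥ b + (a ⬝ᵥ N.map Complex.re *ᵥ b - b ⬝ᵥ N.map Complex.re *ᵥ a) := by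
    simp only [dotProduct, mulVec, Complex.im_sum, Finset.mul_sum, ← Finset.sum_add_distrib,
      ← Finset.sum_sub_distrib]
    refine Finset.sum_congr rfl fun μ _ => Finset.sum_congr rfl fun ν _ => ?_
    simp [a, b, Complex.mul_im, Complex.mul_re]
    ring
  rw [hexpand, (hN.map Complex.re).dotProduct_mulVec_comm a b, sub_self, add_zero]

theorem sum_sum_im_mul_mul_star {N : Matrix n n ℂ} (hN : N.IsSymm) (x : n → ℂ) :
    ∑ μ, ∑ ν, ((N μ ν).im : ℂ) * x ν * star (x μ) = ((star x ⬝ᵥ N *ᵥ x).im : ℂ) := by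
  set a : n → ℝ := fun i => (x i).re
  set b : n → ℝ := fun i => (x i).im
  have hexpand : ∑ μ, ∑ ν, ((N μ ν).im : ℂ) * x ν * star (x μ) =
      ((a ⬝ᵥ N.map Complex.im *ᵥ a + b ⬝ᵥ N.map Complex.im *ᵥ b : ℝ) : ℂ) +
        ((a ⬝ᵥ N.map Complex.im *ᵥ b - b ⬝ᵥ N.map Complex.im *ᵥ a : ℝ) : ℂ) * Complex.I := by
    apply Complex.ext <;>
    simp only [dotProduct, mulVec, Complex.re_sum, Complex.im_sum, Finset.mul_sum,
      ← Finset.sum_add_distrib, ← Finset.sum_sub_distrib, Complex.add_re, Complex.add_im,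
      Complex.mul_I_re, Complex.mul_I_im, Complex.ofReal_re, Complex.ofReal_im, neg_zero,
      add_zero, zero_add] <;>
    refine Finset.sum_congr rfl fun μ _ => Finset.sum_congr rfl fun ν _ => ?_ <;>
    simp [a, b, Complex.mul_im, Complex.mul_re] <;>
    ring
  rw [hexpand, im_star_dotProduct_mulVec hN, (hN.map Complex.im).dotProduct_mulVec_comm a b,
    sub_self, Complex.ofReal_zero, zero_mul, add_zero]

theorem im_star_dotProduct_mulVec_nonneg_and_eq_zero_iff {N : Matrix n n ℂ} (hN : N.IsSymm)
    {c : n → ℝ} (hNc : N.map Complex.im *ᵥ c = 0) {W : Submodule ℝ (n → ℝ)}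
    (hW : IsCompl W (ℝ ∙ c)) (hpos : ∀ w ∈ W, w ≠ 0 → 0 < w ⬝ᵥ N.map Complex.im *ᵥ w)
    (f : n → ℂ) :
    0 ≤ (star f ⬝ᵥ N *ᵥ f).im ∧
      ((star f ⬝ᵥ N *ᵥ f).im = 0 ↔ ∃ z : ℂ, f = z • fun i => (c i : ℂ)) := by
  obtain ⟨hre, hre0⟩ := (hN.map Complex.im).dotProduct_mulVec_nonneg_and_eq_zero_iff hNc hW hpos
    fun i => (f i).re
  obtain ⟨him, him0⟩ := (hN.map Complex.im).dotProduct_mulVec_nonneg_and_eq_zero_iff hNc hW hpos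
    fun i => (f i).im
  rw [im_star_dotProduct_mulVec hN, add_eq_zero_iff_of_nonneg hre him, hre0, him0]
  refine ⟨add_nonneg hre him, ⟨?_, ?_⟩⟩
  · rintro ⟨⟨t, ht⟩, ⟨t', ht'⟩⟩
    exact ⟨⟨t, t'⟩, funext fun i => Complex.ext (by simpa using congrFun ht i)
      (by simpa using congrFun ht' i)⟩
  · rintro ⟨z, rfl⟩
    exact ⟨⟨z.re, funext fun i => by simp⟩, ⟨z.im, funext fun i => by simp⟩⟩

end QuadraticForms

section Hessian

variable {n : Type*} [Fintype n] [DecidableEq n]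

theorem Matrix.mul_nonsing_inv_mulVec_mulVec {R : Type*} [CommRing R] {J : Matrix n n R}
    (hJ : IsUnit J) (V : Matrix n n R) (f : n → R) : (V * J⁻¹) *ᵥ (J *ᵥ f) = V *ᵥ f := by
  rw [mulVec_mulVec, Matrix.mul_assoc, nonsing_inv_mul _ ((isUnit_iff_isUnit_det J).1 hJ),
    Matrix.mul_one]

theorem Matrix.isSymm_mul_nonsing_inv {R : Type*} [CommRing R] {J V : Matrix n n R}
    (h : Jᵀ * V = Vᵀ * J) (hJ : IsUnit J) : (V * J⁻¹).IsSymm := by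
  have hdet := (isUnit_iff_isUnit_det J).1 hJ
  have hdetT : IsUnit Jᵀ.det := by rwa [det_transpose]
  calc (V * J⁻¹)ᵀ = Jᵀ⁻¹ * (Vᵀ * J * J⁻¹) := by
        rw [transpose_mul, transpose_nonsing_inv, Matrix.mul_assoc, mul_nonsing_inv _ hdet,
          Matrix.mul_one]
    _ = V * J⁻¹ := by
        rw [← h, Matrix.mul_assoc, ← Matrix.mul_assoc Jᵀ⁻¹, nonsing_inv_mul _ hdetT,
          Matrix.one_mul]

variable {J V M₀ : Matrix n n ℂ} {c : n → ℂ}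

theorem isUnit_of_im_star_dotProduct_eq
    (hcons : ∀ f, (star (J *ᵥ f) ⬝ᵥ V *ᵥ f).im = (star f ⬝ᵥ M₀ *ᵥ f).im)
    (hker : ∀ f, (star f ⬝ᵥ M₀ *ᵥ f).im = 0 → ∃ z : ℂ, f = z • c) (hc : J *ᵥ c ≠ 0) :
    IsUnit J := by
  rw [isUnit_iff_isUnit_det, isUnit_iff_ne_zero]
  intro hdet
  obtain ⟨f, hf, hJf⟩ := exists_mulVec_eq_zero_iff.2 hdet
  obtain ⟨z, rfl⟩ := hker f (by rw [← hcons, hJf]; simp)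
  rw [mulVec_smul, smul_eq_zero] at hJf
  rcases hJf with rfl | hJc
  · exact hf (zero_smul ℂ c)
  · exact hc hJc

theorem im_star_dotProduct_mul_nonsing_inv_mulVec_nonneg_and_eq_zero_iff (hJ : IsUnit J)
    (hcons : ∀ f, (star (J *ᵥ f) ⬝ᵥ V *ᵥ f).im = (star f ⬝ᵥ M₀ *ᵥ f).im)
    (hM₀ : ∀ f, 0 ≤ (star f ⬝ᵥ M₀ *ᵥ f).im ∧
      ((star f ⬝ᵥ M₀ *ᵥ f).im = 0 ↔ ∃ z : ℂ, f = z • c))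
    (x : n → ℂ) :
    0 ≤ (star x ⬝ᵥ (V * J⁻¹) *ᵥ x).im ∧
      ((star x ⬝ᵥ (V * J⁻¹) *ᵥ x).im = 0 ↔ ∃ z : ℂ, x = z • J *ᵥ c) := by
  obtain ⟨f, rfl⟩ := mulVec_surjective_iff_isUnit.2 hJ x
  simp_rw [mul_nonsing_inv_mulVec_mulVec hJ, hcons, ← mulVec_smul,
    (mulVec_injective_iff_isUnit.2 hJ).eq_iff]
  exact hM₀ f

end Hessian

theorem gaussian_beam_hessian_properties_general
    (A B C : ℝ → Matrix (Fin 4) (Fin 4) ℝ)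
    (hAcont : ∀ i j : Fin 4, Continuous fun s => A s i j)
    (hBcont : ∀ i j : Fin 4, Continuous fun s => B s i j)
    (hCcont : ∀ i j : Fin 4, Continuous fun s => C s i j)
    (hAsymm : ∀ s : ℝ, (A s)ᵀ = A s)
    (hCsymm : ∀ s : ℝ, (C s)ᵀ = C s)
    (J V : ℝ → Matrix (Fin 4) (Fin 4) ℂ)
    (hJ : ∀ (s : ℝ) (i j : Fin 4), HasDerivAt (fun t => J t i j)
      (((matC (B s))ᵀ * J s + matC (C s) * V s) i j) s)
    (hV : ∀ (s : ℝ) (i j : Fin 4), HasDerivAt (fun t => V t i j)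
      ((-(matC (A s)) * J s - matC (B s) * V s) i j) s)
    (M₀ : Matrix (Fin 4) (Fin 4) ℂ) (hM₀ : M₀ᵀ = M₀)
    (hJ0 : J 0 = 1) (hV0 : V 0 = M₀)
    (j v : ℝ → Fin 4 → ℝ)
    (hj : ∀ (s : ℝ) (i : Fin 4), HasDerivAt (fun t => j t i)
      (((B s)ᵀ *ᵥ j s + C s *ᵥ v s) i) s)
    (hv : ∀ (s : ℝ) (i : Fin 4), HasDerivAt (fun t => v t i)
      ((-(A s) *ᵥ j s - B s *ᵥ v s) i) s)
    (hjne : ∀ s : ℝ, j s ≠ 0)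
    (hv0 : (fun i => ((v 0 i : ℝ) : ℂ)) = M₀ *ᵥ (fun i => ((j 0 i : ℝ) : ℂ)))
    (W : Submodule ℝ (Fin 4 → ℝ))
    (hWcompl : IsCompl W (Submodule.span ℝ {j 0}))
    (hWpos : ∀ x ∈ W, x ≠ 0 →
      0 < ∑ μ : Fin 4, ∑ ν : Fin 4, x μ * (M₀ μ ν).im * x ν) :
    -- (i) compatibility of the distinguished solution with the matrix solution
    (∀ s : ℝ,
      (fun i => ((j s i : ℝ) : ℂ)) = J s *ᵥ (fun i => ((j 0 i : ℝ) : ℂ)) ∧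
      (fun i => ((v s i : ℝ) : ℂ)) = V s *ᵥ (fun i => ((j 0 i : ℝ) : ℂ))) ∧
    -- (ii) invertibility of J(s), symmetry of M(s) = V(s) J(s)⁻¹, M(s) j(s) = v(s)
    (∀ s : ℝ, IsUnit (J s) ∧
      (V s * (J s)⁻¹)ᵀ = V s * (J s)⁻¹ ∧
      (V s * (J s)⁻¹) *ᵥ (fun i => ((j s i : ℝ) : ℂ)) = (fun i => ((v s i : ℝ) : ℂ))) ∧
    -- (iii) conservation of the imaginary-part quadratic form
    (∀ (s : ℝ) (f : Fin 4 → ℂ),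
      ∑ μ : Fin 4, ∑ ν : Fin 4,
          ((((V s * (J s)⁻¹) μ ν).im : ℝ) : ℂ) * (J s *ᵥ f) ν * star ((J s *ᵥ f) μ) =
      ∑ μ : Fin 4, ∑ ν : Fin 4,
          (((M₀ μ ν).im : ℝ) : ℂ) * f ν * star (f μ)) ∧
    -- (iv) Im M(s) is positive semidefinite with kernel exactly ℂ · j(s)
    (∀ (s : ℝ) (x : Fin 4 → ℂ),
      (0 ≤ (∑ μ : Fin 4, ∑ ν : Fin 4,
        ((((V s * (J s)⁻¹) μ ν).im : ℝ) : ℂ) * x ν * star (x μ)).re) ∧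
      (∑ μ : Fin 4, ∑ ν : Fin 4,
        ((((V s * (J s)⁻¹) μ ν).im : ℝ) : ℂ) * x ν * star (x μ)).im = 0 ∧
      ((∑ μ : Fin 4, ∑ ν : Fin 4,
        ((((V s * (J s)⁻¹) μ ν).im : ℝ) : ℂ) * x ν * star (x μ)) = 0 ↔
        ∃ z : ℂ, x = fun i => z * ((j s i : ℝ) : ℂ))) := by
  have hsol : ∀ f, IsHamiltonianSolution A B C (fun s => J s *ᵥ f) (fun s => V s *ᵥ f) :=
    isHamiltonianSolution_mulVec hJ hV
  have hcompat : ∀ s, (fun i => ((j s i : ℝ) : ℂ)) = J s *ᵥ (fun i => ((j 0 i : ℝ) : ℂ)) ∧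
      (fun i => ((v s i : ℝ) : ℂ)) = V s *ᵥ (fun i => ((j 0 i : ℝ) : ℂ)) :=
    (isHamiltonianSolution_ofReal hj hv).eq_of_eq hAcont hBcont hCcont (hsol _)
      (by rw [hJ0, one_mulVec]) (by rw [hV0, hv0])
  have hcons : ∀ s f, (star (J s *ᵥ f) ⬝ᵥ V s *ᵥ f).im = (star f ⬝ᵥ M₀ *ᵥ f).im :=
    fun s f => by simpa [hJ0, hV0] using (hsol f).im_star_dotProduct_eq hAsymm hCsymm s
  have hpos := im_star_dotProduct_mulVec_nonneg_and_eq_zero_iff hM₀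
    (by rw [map_im_mulVec, ← hv0]; funext i; simp) hWcompl
    (fun w hw hw0 => by simpa [dotProduct, mulVec, Finset.mul_sum, mul_assoc] using hWpos w hw hw0)
  have hunit : ∀ s, IsUnit (J s) := fun s =>
    isUnit_of_im_star_dotProduct_eq (hcons s) (fun f => (hpos f).2.1) fun h =>
      hjne s (funext fun i => by simpa [← (hcompat s).1] using congrFun h i)
  have hsymm : ∀ s, (V s * (J s)⁻¹).IsSymm := fun s =>
    isSymm_mul_nonsing_inv (sub_eq_zero.1 <| by
      rw [transpose_mul_sub_transpose_mul_eq_of_isHamiltonianSolution hAsymm hCsymm hsol s, hJ0,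
        hV0, hM₀]
      simp) (hunit s)
  refine ⟨hcompat, fun s => ⟨hunit s, hsymm s, ?_⟩, fun s f => ?_, fun s x => ?_⟩
  · rw [(hcompat s).1, (hcompat s).2, mul_nonsing_inv_mulVec_mulVec (hunit s)]
  · rw [sum_sum_im_mul_mul_star (hsymm s), sum_sum_im_mul_mul_star hM₀,
      mul_nonsing_inv_mulVec_mulVec (hunit s), hcons]
  · obtain ⟨hnn, hzero⟩ :=
      im_star_dotProduct_mul_nonsing_inv_mulVec_nonneg_and_eq_zero_iff (hunit s) (hcons s) hpos x
    rw [sum_sum_im_mul_mul_star (hsymm s), Complex.ofReal_re, Complex.ofReal_im,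
      Complex.ofReal_eq_zero, hzero, ← (hcompat s).1]
    exact ⟨hnn, rfl, Iff.rfl⟩

/-- The properties of the Hessian `M(s) = V(s) J(s)⁻¹` of the Gaussian beam phase
(Section 2.2 of the paper): compatibility `j(s) = J(s) j(0)`, `v(s) = V(s) j(0)`;
invertibility of `J(s)`; symmetry of `M(s)` and `M(s) j(s) = v(s)`; conservation
of the imaginary-part quadratic form; and positive semidefiniteness of `Im M(s)`
with kernel exactly `ℂ · j(s)`. -/
theorem gaussian_beam_hessian_properties
    (A B C : ℝ → Matrix (Fin 4) (Fin 4) ℝ)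
    (hAcont : ∀ i j : Fin 4, Continuous fun s => A s i j)
    (hBcont : ∀ i j : Fin 4, Continuous fun s => B s i j)
    (hCcont : ∀ i j : Fin 4, Continuous fun s => C s i j)
    (hAsymm : ∀ s : ℝ, (A s)ᵀ = A s)
    (hCsymm : ∀ s : ℝ, (C s)ᵀ = C s)
    (J V : ℝ → Matrix (Fin 4) (Fin 4) ℂ)
    (hJ : ∀ (s : ℝ) (i j : Fin 4), HasDerivAt (fun t => J t i j)
      (((matC (B s))ᵀ * J s + matC (C s) * V s) i j) s)
    (hV : ∀ (s : ℝ) (i j : Fin 4), HasDerivAt (fun t => V t i j)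
      ((-(matC (A s)) * J s - matC (B s) * V s) i j) s)
    (M₀ : Matrix (Fin 4) (Fin 4) ℂ) (hM₀ : M₀ᵀ = M₀)
    (hJ0 : J 0 = 1) (hV0 : V 0 = M₀)
    (j v : ℝ → Fin 4 → ℝ)
    (hj : ∀ (s : ℝ) (i : Fin 4), HasDerivAt (fun t => j t i)
      (((B s)ᵀ *ᵥ j s + C s *ᵥ v s) i) s)
    (hv : ∀ (s : ℝ) (i : Fin 4), HasDerivAt (fun t => v t i)
      ((-(A s) *ᵥ j s - B s *ᵥ v s) i) s)
    (hjne : ∀ s : ℝ, j s ≠ 0)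
    (hv0 : (fun i => ((v 0 i : ℝ) : ℂ)) = M₀ *ᵥ (fun i => ((j 0 i : ℝ) : ℂ)))
    (W : Submodule ℝ (Fin 4 → ℝ))
    (hWdim : Module.finrank ℝ W = 3)
    (hWcompl : IsCompl W (Submodule.span ℝ {j 0}))
    (hWpos : ∀ x ∈ W, x ≠ 0 →
      0 < ∑ μ : Fin 4, ∑ ν : Fin 4, x μ * (M₀ μ ν).im * x ν) :
    -- (i) compatibility of the distinguished solution with the matrix solution
    (∀ s : ℝ,
      (fun i => ((j s i : ℝ) : ℂ)) = J s *ᵥ (fun i => ((j 0 i : ℝ) : ℂ)) ∧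
      (fun i => ((v s i : ℝ) : ℂ)) = V s *ᵥ (fun i => ((j 0 i : ℝ) : ℂ))) ∧
    -- (ii) invertibility of J(s), symmetry of M(s) = V(s) J(s)⁻¹, M(s) j(s) = v(s)
    (∀ s : ℝ, IsUnit (J s) ∧
      (V s * (J s)⁻¹)ᵀ = V s * (J s)⁻¹ ∧
      (V s * (J s)⁻¹) *ᵥ (fun i => ((j s i : ℝ) : ℂ)) = (fun i => ((v s i : ℝ) : ℂ))) ∧
    -- (iii) conservation of the imaginary-part quadratic form
    (∀ (s : ℝ) (f : Fin 4 → ℂ),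
      ∑ μ : Fin 4, ∑ ν : Fin 4,
          ((((V s * (J s)⁻¹) μ ν).im : ℝ) : ℂ) * (J s *ᵥ f) ν * star ((J s *ᵥ f) μ) =
      ∑ μ : Fin 4, ∑ ν : Fin 4,
          (((M₀ μ ν).im : ℝ) : ℂ) * f ν * star (f μ)) ∧
    -- (iv) Im M(s) is positive semidefinite with kernel exactly ℂ · j(s)
    (∀ (s : ℝ) (x : Fin 4 → ℂ),
      (0 ≤ (∑ μ : Fin 4, ∑ ν : Fin 4,
        ((((V s * (J s)⁻¹) μ ν).im : ℝ) : ℂ) * x ν * star (x μ)).re) ∧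
      (∑ μ : Fin 4, ∑ ν : Fin 4,
        ((((V s * (J s)⁻¹) μ ν).im : ℝ) : ℂ) * x ν * star (x μ)).im = 0 ∧
      ((∑ μ : Fin 4, ∑ ν : Fin 4,
        ((((V s * (J s)⁻¹) μ ν).im : ℝ) : ℂ) * x ν * star (x μ)) = 0 ↔
        ∃ z : ℂ, x = fun i => z * ((j s i : ℝ) : ℂ))) :=
  gaussian_beam_hessian_properties_general A B C hAcont hBcont hCcont hAsymm hCsymm J V hJ hV M₀ hM₀
    hJ0 hV0 j v hj hv hjne hv0 W hWcompl hWpos
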